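/- arXiv:1603.04715 — 8 statements merged into one kernel-verified Lean document; each statement's English description precedes it below -/
import Mathlib

section
/- Let $h \in C^1([0,\infty))$ be increasing with $h(0)=0$, satisfying $h(2t) \le d\, h(t)$ for all $t \ge 0$ and $c_1 h(t)/t \le h'(t) \le c_2 h(t)/t$ for all $t > 0$. Let $c > 0$ and set $c_k = c(1 - 2^{-k})$. Then there is a constant $K$ depending only on $d, c_1, c_2$ such that for all $k \ge 0$ and all $v > c_{k+1}$, $h(v) \le K\, 2^{k+1} (h(v) - h(c_k))_+$. -/
/-!
If `t h'(t) ≥ c₁ h(t)` and `h` is increasing, the mean value theorem gives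
`h v - h a ≥ c₁ h(a) (v - a) / v` for `0 ≤ a < v`. For `a = c_k < c_{k+1} < v` the relative gap
`(v - a) / v` is at least `2^{-(k+1)}`, so `h v - h a ≥ c₁ 2^{-(k+1)} h a`, and then
`h v = h a + (h v - h a) ≤ (1 + 2^{k+1} / c₁) (h v - h a)`. One may take `K = 1 + 1 / c₁`.
-/

open Set

theorem mul_div_le_sub_of_mul_le_deriv {h h' : ℝ → ℝ} {c₁ a v : ℝ} (hc₁ : 0 ≤ c₁)
    (ha : 0 ≤ a) (hav : a < v) (hcont : ContinuousOn h (Icc a v))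
    (hderiv : ∀ t ∈ Ioo a v, HasDerivAt h (h' t) t) (hmono : MonotoneOn h (Icc a v))
    (hha : 0 ≤ h a) (hlow : ∀ t ∈ Ioo a v, c₁ * h t / t ≤ h' t) :
    c₁ * h a * ((v - a) / v) ≤ h v - h a := by
  obtain ⟨ξ, hξ, hslope⟩ := exists_hasDerivAt_eq_slope h h' hav hcont hderiv
  have hξ0 : 0 < ξ := ha.trans_lt hξ.1
  have hgap : 0 < v - a := sub_pos.mpr hav
  have hhξ : h a ≤ h ξ := hmono (left_mem_Icc.mpr hav.le) (Ioo_subset_Icc_self hξ) hξ.1.le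
  have hh'ξ : c₁ * h a / v ≤ h' ξ :=
    calc c₁ * h a / v ≤ c₁ * h a / ξ := by gcongr; exact hξ.2.le
      _ ≤ c₁ * h ξ / ξ := by gcongr
      _ ≤ h' ξ := hlow ξ hξ
  calc c₁ * h a * ((v - a) / v) = c₁ * h a / v * (v - a) := by ring
    _ ≤ h' ξ * (v - a) := by gcongr
    _ = h v - h a := by rw [hslope, div_mul_cancel₀ _ hgap.ne']

theorem le_one_add_inv_mul_sub {x y ε : ℝ} (hε : 0 < ε) (hx : ε * x ≤ y - x) :
    y ≤ (1 + ε⁻¹) * (y - x) := by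
  have : x ≤ ε⁻¹ * (y - x) := by
    rw [← div_eq_inv_mul, le_div_iff₀ hε]
    linarith
  linarith

theorem mul_le_sub_of_mul_one_sub_le {c r v : ℝ} (hc : 0 ≤ c) (hr : r ≤ 1)
    (hv : c * (1 - r) ≤ v) : r * v ≤ v - c * (1 - 2 * r) := by
  nlinarith [mul_nonneg hc (sq_nonneg r), mul_le_mul_of_nonneg_left hv (sub_nonneg.mpr hr)]

theorem one_add_inv_mul_le_mul_inv (c : ℝ) {r : ℝ} (hr : 0 < r) (hr1 : r ≤ 1) :
    1 + (c * r)⁻¹ ≤ (1 + c⁻¹) * r⁻¹ := by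
  have : 1 ≤ r⁻¹ := (one_le_inv₀ hr).mpr hr1
  rw [mul_inv, add_mul, one_mul]
  linarith

theorem le_one_add_inv_mul_sub_of_mul_le_deriv {h h' : ℝ → ℝ} {c₁ r a v : ℝ} (hc₁ : 0 < c₁)
    (hr : 0 < r) (hderiv : ∀ t > (0 : ℝ), HasDerivAt h (h' t) t)
    (hcont : ContinuousOn h (Ici 0)) (hmono : MonotoneOn h (Ici 0)) (h0 : h 0 = 0)
    (hlow : ∀ t > (0 : ℝ), c₁ * h t / t ≤ h' t)
    (ha : 0 ≤ a) (hav : a < v) (hrel : r * v ≤ v - a) :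
    h v ≤ (1 + (c₁ * r)⁻¹) * (h v - h a) := by
  have hv : 0 < v := ha.trans_lt hav
  have hha : 0 ≤ h a := h0 ▸ hmono self_mem_Ici ha ha
  have hgap : c₁ * h a * ((v - a) / v) ≤ h v - h a :=
    mul_div_le_sub_of_mul_le_deriv hc₁.le ha hav (hcont.mono fun t ht => ha.trans ht.1)
      (fun t ht => hderiv t (ha.trans_lt ht.1)) (hmono.mono fun t ht => ha.trans ht.1) hha
      (fun t ht => hlow t (ha.trans_lt ht.1))
  have hr_le : r ≤ (v - a) / v := (le_div_iff₀ hv).mpr hrel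
  refine le_one_add_inv_mul_sub (mul_pos hc₁ hr) ?_
  calc c₁ * r * h a = c₁ * h a * r := by ring
    _ ≤ c₁ * h a * ((v - a) / v) := by gcongr
    _ ≤ h v - h a := hgap

theorem level_truncation_estimate_general
    (h h' : ℝ → ℝ) (c₁ c₂ : ℝ) (hc₁ : 0 < c₁)
    (hderiv : ∀ t > (0 : ℝ), HasDerivAt h (h' t) t)
    (hcont : ContinuousOn h (Set.Ici 0))
    (hmono : MonotoneOn h (Set.Ici 0))
    (h0 : h 0 = 0)
    (hcomp : ∀ t > (0 : ℝ), c₁ * h t / t ≤ h' t ∧ h' t ≤ c₂ * h t / t) :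
    ∃ K > (0 : ℝ), ∀ c > (0 : ℝ), ∀ k : ℕ, ∀ v : ℝ,
      c * (1 - (1 / 2 : ℝ) ^ (k + 1)) < v →
      h v ≤ K * 2 ^ (k + 1) * max (h v - h (c * (1 - (1 / 2 : ℝ) ^ k))) 0 := by
  refine ⟨1 + c₁⁻¹, by positivity, fun c hc k v hv => ?_⟩
  set r : ℝ := (1 / 2) ^ (k + 1)
  set a := c * (1 - (1 / 2 : ℝ) ^ k)
  have hr : 0 < r := by positivity
  have hr1 : r ≤ 1 := pow_le_one₀ (by norm_num) (by norm_num)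
  have ha_eq : a = c * (1 - 2 * r) := by simp only [a, r, pow_succ]; ring
  have ha : 0 ≤ a := mul_nonneg hc.le (sub_nonneg.mpr (pow_le_one₀ (by norm_num) (by norm_num)))
  have hav : a < v := by rw [ha_eq]; nlinarith
  have hrel : r * v ≤ v - a := ha_eq ▸ mul_le_sub_of_mul_one_sub_le hc.le hr1 hv.le
  have hr_inv : r⁻¹ = 2 ^ (k + 1) := by simp only [r, one_div, inv_pow, inv_inv]
  have hhav : h a ≤ h v := hmono ha (ha.trans hav.le) hav.le
  rw [max_eq_left (sub_nonneg.mpr hhav), ← hr_inv]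
  calc h v ≤ (1 + (c₁ * r)⁻¹) * (h v - h a) :=
        le_one_add_inv_mul_sub_of_mul_le_deriv hc₁ hr hderiv hcont hmono h0
          (fun t ht => (hcomp t ht).1) ha hav hrel
    _ ≤ (1 + c₁⁻¹) * r⁻¹ * (h v - h a) := by
        gcongr
        exact one_add_inv_mul_le_mul_inv c₁ hr hr1

theorem level_truncation_estimate
    (h h' : ℝ → ℝ) (d c₁ c₂ : ℝ) (hc₁ : 0 < c₁) (hc₁₂ : c₁ ≤ c₂)
    (hderiv : ∀ t > (0 : ℝ), HasDerivAt h (h' t) t)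
    (hcont : ContinuousOn h (Set.Ici 0))
    (hcont' : ContinuousOn h' (Set.Ici 0))
    (hmono : MonotoneOn h (Set.Ici 0))
    (h0 : h 0 = 0)
    (hdbl : ∀ t ≥ (0 : ℝ), h (2 * t) ≤ d * h t)
    (hcomp : ∀ t > (0 : ℝ), c₁ * h t / t ≤ h' t ∧ h' t ≤ c₂ * h t / t) :
    ∃ K > (0 : ℝ), ∀ c > (0 : ℝ), ∀ k : ℕ, ∀ v : ℝ,
      c * (1 - (1 / 2 : ℝ) ^ (k + 1)) < v →
      h v ≤ K * 2 ^ (k + 1) * max (h v - h (c * (1 - (1 / 2 : ℝ) ^ k))) 0 :=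
  level_truncation_estimate_general h h' c₁ c₂ hc₁ hderiv hcont hmono h0 hcomp
end

section
/- Let $\phi$ be a twice-differentiable N-function satisfying $c\,\phi'(t) \le t\,\phi''(t) \le C\,\phi'(t)$ for all $t > 0$ (for some $0 < c \le C$). Define $\psi'(t) = \sqrt{t\,\phi'(t)}$ and $\psi(t) = \int_0^t \psi'(s)\,ds$. Then $\psi$ also satisfies $c'\,\psi'(t) \le t\,\psi''(t) \le C'\,\psi'(t)$ for constants depending only on $c, C$, and moreover $\psi''(t) \sim \sqrt{\phi''(t)}$ uniformly in $t > 0$. -/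
/-! With the index `r = t φ''(t) / φ'(t) ∈ [c, C]`, the formula
`ψ'' = (φ' + t φ'') / (2 √(t φ'))` becomes `t ψ'' = (1 + r) / 2 · ψ'` and
`ψ'' = (1 + r) / (2 √r) · √φ''`; both factors are bounded above and below in terms of `c, C`
(the second from below by AM-GM). -/

open Real

lemma eq_div_of_hasDerivAt_sqrt_mul {f : ℝ → ℝ} {f' g t : ℝ} (hf : HasDerivAt f f' t)
    (ht : t * f t ≠ 0) (hg : HasDerivAt (fun s => √(s * f s)) g t) :
    g = (f t + t * f') / (2 * √(t * f t)) := by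
  simpa using hg.unique (((hasDerivAt_id t).mul hf).sqrt ht)

lemma mul_add_div_two_sqrt_mul {t a d : ℝ} (ht : 0 < t) (ha : 0 < a) :
    t * ((a + t * d) / (2 * √(t * a))) = (1 + t * d / a) / 2 * √(t * a) := by
  have hs : √(t * a) ^ 2 = t * a := sq_sqrt (by positivity)
  have hs0 : 0 < √(t * a) := sqrt_pos.2 (by positivity)
  field_simp
  rw [hs]
  ring

lemma add_div_two_sqrt_mul {t a d : ℝ} (ht : 0 < t) (ha : 0 < a) (hd : 0 < d) :
    (a + t * d) / (2 * √(t * a)) = (1 + t * d / a) / (2 * √(t * d / a)) * √d := by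
  have key : √(t * a) = √(t * d / a) * √d * (a / d) := by
    rw [← sqrt_mul (by positivity), ← sqrt_sq (by positivity : 0 ≤ a / d),
      ← sqrt_mul (by positivity)]
    congr 1
    field_simp
  rw [key]
  field_simp
  rw [sq_sqrt hd.le]

lemma one_le_one_add_div_two_sqrt {r : ℝ} (hr : 0 < r) : 1 ≤ (1 + r) / (2 * √r) := by
  have hs : √r ^ 2 = r := sq_sqrt hr.le
  rw [le_div_iff₀ (by positivity)]
  nlinarith [sq_nonneg (√r - 1)]

lemma one_add_div_two_sqrt_le {c r C : ℝ} (hc : 0 < c) (hcr : c ≤ r) (hrC : r ≤ C) :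
    (1 + r) / (2 * √r) ≤ ((√c)⁻¹ + √C) / 2 := by
  have hr : 0 < √r := sqrt_pos.2 (hc.trans_le hcr)
  have split : (1 + r) / (2 * √r) = ((√r)⁻¹ + √r) / 2 := by
    field_simp
    rw [sq_sqrt (hc.trans_le hcr).le]
  rw [split]
  gcongr

theorem psi_satisfies_main_assumption_general
    (φ' φ'' ψ'' : ℝ → ℝ) (c C : ℝ) (hc : 0 < c)
    (hφ'' : ∀ t > (0 : ℝ), HasDerivAt φ' (φ'' t) t)
    (hψ'' : ∀ t > (0 : ℝ), HasDerivAt (fun s => Real.sqrt (s * φ' s)) (ψ'' t) t)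
    (hpos : ∀ t > (0 : ℝ), 0 < φ' t)
    (hassum : ∀ t > (0 : ℝ), c * φ' t ≤ t * φ'' t ∧ t * φ'' t ≤ C * φ' t) :
    ∃ c' > (0 : ℝ), ∃ C' > (0 : ℝ),
      (∀ t > (0 : ℝ), c' * Real.sqrt (t * φ' t) ≤ t * ψ'' t ∧
        t * ψ'' t ≤ C' * Real.sqrt (t * φ' t)) ∧
      (∀ t > (0 : ℝ), c' * Real.sqrt (φ'' t) ≤ ψ'' t ∧
        ψ'' t ≤ C' * Real.sqrt (φ'' t)) := by
  have hψ''_eq : ∀ t > 0, ψ'' t = (φ' t + t * φ'' t) / (2 * √(t * φ' t)) := fun t ht =>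
    eq_div_of_hasDerivAt_sqrt_mul (hφ'' t ht) (mul_pos ht (hpos t ht)).ne' (hψ'' t ht)
  have hindex : ∀ t > 0, c ≤ t * φ'' t / φ' t ∧ t * φ'' t / φ' t ≤ C := fun t ht =>
    ⟨(le_div_iff₀ (hpos t ht)).2 (hassum t ht).1, (div_le_iff₀ (hpos t ht)).2 (hassum t ht).2⟩
  refine ⟨min ((1 + c) / 2) 1, by positivity, max ((1 + C) / 2) (((√c)⁻¹ + √C) / 2),
    lt_max_of_lt_right (by positivity), fun t ht => ?_, fun t ht => ?_⟩
  · obtain ⟨hcr, hrC⟩ := hindex t ht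
    rw [hψ''_eq t ht, mul_add_div_two_sqrt_mul ht (hpos t ht)]
    constructor <;> gcongr
    · exact (min_le_left _ _).trans (by linarith)
    · exact (by linarith : (1 + t * φ'' t / φ' t) / 2 ≤ (1 + C) / 2).trans (le_max_left _ _)
  · obtain ⟨hcr, hrC⟩ := hindex t ht
    have hφ''_pos : 0 < φ'' t :=
      (pos_iff_pos_of_mul_pos ((mul_pos hc (hpos t ht)).trans_le (hassum t ht).1)).1 ht
    rw [hψ''_eq t ht, add_div_two_sqrt_mul ht (hpos t ht) hφ''_pos]
    constructor <;> gcongr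
    · exact (min_le_right _ _).trans (one_le_one_add_div_two_sqrt (hc.trans_le hcr))
    · exact (one_add_div_two_sqrt_le hc hcr hrC).trans (le_max_right _ _)

theorem psi_satisfies_main_assumption
    (φ φ' φ'' ψ'' : ℝ → ℝ) (c C : ℝ) (hc : 0 < c) (hcC : c ≤ C)
    (hφ' : ∀ t > (0 : ℝ), HasDerivAt φ (φ' t) t)
    (hφ'' : ∀ t > (0 : ℝ), HasDerivAt φ' (φ'' t) t)
    (hψ'' : ∀ t > (0 : ℝ), HasDerivAt (fun s => Real.sqrt (s * φ' s)) (ψ'' t) t)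
    (hpos : ∀ t > (0 : ℝ), 0 < φ' t)
    (hassum : ∀ t > (0 : ℝ), c * φ' t ≤ t * φ'' t ∧ t * φ'' t ≤ C * φ' t) :
    ∃ c' > (0 : ℝ), ∃ C' > (0 : ℝ),
      (∀ t > (0 : ℝ), c' * Real.sqrt (t * φ' t) ≤ t * ψ'' t ∧
        t * ψ'' t ≤ C' * Real.sqrt (t * φ' t)) ∧
      (∀ t > (0 : ℝ), c' * Real.sqrt (φ'' t) ≤ ψ'' t ∧
        ψ'' t ≤ C' * Real.sqrt (φ'' t)) :=
  psi_satisfies_main_assumption_general φ' φ'' ψ'' c C hc hφ'' hψ'' hpos hassum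
end

section
/- Let $\phi$ be an N-function with $\Delta_2(\{\phi, \phi^*\}) < \infty$. For $\lambda \ge 0$ define the shifted function $\phi_\lambda$ by $\phi_\lambda'(t) = \frac{\phi'(\lambda + t)}{\lambda + t}\, t$. Then there is a constant $K$ depending only on $\Delta_2(\phi)$ such that $\phi_\lambda'(2t) \le K\, \phi_\lambda'(t)$ for all $t \ge 0$ and all $\lambda \ge 0$ (i.e. the $\Delta_2$ constants of the shifted functions $\phi_\lambda$ are uniformly bounded in $\lambda$). -/
/-! Since `φ'` is monotone, `s φ'(s)` lies between `φ(s)` and `φ(2s)`, so the Δ₂ condition for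
`φ` with constant `c` gives `2 φ'(2s) ≤ c² φ'(s)`. As `λ + t ≤ λ + 2t ≤ 2(λ + t)`, this bound
transfers to `φ'_λ(2t) ≤ c² φ'_λ(t)`, with a constant independent of `λ`. -/

open MeasureTheory Filter

structure IsNFunctionDeriv (φ' : ℝ → ℝ) : Prop where
  mono : MonotoneOn φ' (Set.Ici 0)
  left_cont : ∀ t > (0 : ℝ), Tendsto φ' (nhdsWithin t (Set.Iio t)) (nhds (φ' t))
  zero : φ' 0 = 0
  pos : ∀ t > (0 : ℝ), 0 < φ' t
  tendsto_top : Tendsto φ' atTop atTop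

noncomputable def phiOf (φ' : ℝ → ℝ) (t : ℝ) : ℝ := ∫ s in (0 : ℝ)..t, φ' s

noncomputable def phiInvDeriv (φ' : ℝ → ℝ) (t : ℝ) : ℝ :=
  sInf {s : ℝ | 0 ≤ s ∧ t < φ' s}

noncomputable def phiConj (φ' : ℝ → ℝ) (t : ℝ) : ℝ :=
  ∫ s in (0 : ℝ)..t, phiInvDeriv φ' s

/-- Derivative of the shifted N-function: `φ'_λ(t) = φ'(λ+t)/(λ+t) · t`. -/
noncomputable def shiftedDeriv (φ' : ℝ → ℝ) (lam t : ℝ) : ℝ :=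
  φ' (lam + t) / (lam + t) * t

section MonotoneDeriv

variable {f : ℝ → ℝ}

lemma nonneg_of_monotoneOn_Ici (hf : MonotoneOn f (Set.Ici 0)) (hf0 : f 0 = 0) {s : ℝ}
    (hs : 0 ≤ s) : 0 ≤ f s :=
  hf0 ▸ hf Set.self_mem_Ici hs hs

lemma intervalIntegrable_of_monotoneOn_Ici (hf : MonotoneOn f (Set.Ici 0)) {a b : ℝ}
    (ha : 0 ≤ a) (hab : a ≤ b) : IntervalIntegrable f volume a b :=
  (hf.mono fun _ hx => ha.trans (Set.uIcc_of_le hab ▸ hx).1).intervalIntegrable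

lemma mul_sub_le_integral_of_monotoneOn_Ici (hf : MonotoneOn f (Set.Ici 0)) {a b : ℝ}
    (ha : 0 ≤ a) (hab : a ≤ b) : f a * (b - a) ≤ ∫ s in a..b, f s := by
  have h := intervalIntegral.integral_mono_on hab intervalIntegrable_const
    (intervalIntegrable_of_monotoneOn_Ici hf ha hab)
    fun x hx => hf (Set.mem_Ici.2 ha) (Set.mem_Ici.2 (ha.trans hx.1)) hx.1
  simpa [mul_comm] using h

lemma integral_le_mul_sub_of_monotoneOn_Ici (hf : MonotoneOn f (Set.Ici 0)) {a b : ℝ}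
    (ha : 0 ≤ a) (hab : a ≤ b) : ∫ s in a..b, f s ≤ f b * (b - a) := by
  have h := intervalIntegral.integral_mono_on hab
    (intervalIntegrable_of_monotoneOn_Ici hf ha hab) intervalIntegrable_const
    fun x hx => hf (Set.mem_Ici.2 (ha.trans hx.1)) (Set.mem_Ici.2 (ha.trans hab)) hx.2
  simpa [mul_comm] using h

lemma phiOf_le_mul_apply (hf : MonotoneOn f (Set.Ici 0)) {s : ℝ} (hs : 0 ≤ s) :
    phiOf f s ≤ s * f s := by
  simpa [phiOf, mul_comm] using integral_le_mul_sub_of_monotoneOn_Ici hf le_rfl hs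

lemma mul_apply_le_phiOf_two_mul (hf : MonotoneOn f (Set.Ici 0)) (hf0 : f 0 = 0) {s : ℝ}
    (hs : 0 ≤ s) : s * f s ≤ phiOf f (2 * s) := by
  have hsplit : phiOf f (2 * s) = (∫ x in (0 : ℝ)..s, f x) + ∫ x in s..(2 * s), f x :=
    (intervalIntegral.integral_add_adjacent_intervals
      (intervalIntegrable_of_monotoneOn_Ici hf le_rfl hs)
      (intervalIntegrable_of_monotoneOn_Ici hf hs (by linarith))).symm
  have hhead : 0 ≤ ∫ x in (0 : ℝ)..s, f x :=
    intervalIntegral.integral_nonneg hs fun x hx => nonneg_of_monotoneOn_Ici hf hf0 hx.1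
  have htail := mul_sub_le_integral_of_monotoneOn_Ici hf hs (by linarith : s ≤ 2 * s)
  rw [hsplit]
  linarith

lemma phiOf_pos (hf : MonotoneOn f (Set.Ici 0)) (hf0 : f 0 = 0)
    (hpos : ∀ t > 0, 0 < f t) {s : ℝ} (hs : 0 < s) : 0 < phiOf f s := by
  have h := mul_apply_le_phiOf_two_mul hf hf0 (by linarith : 0 ≤ s / 2)
  rw [mul_div_cancel₀ s two_ne_zero] at h
  exact (mul_pos (half_pos hs) (hpos _ (half_pos hs))).trans_le h

lemma pos_of_phiOf_doubling (hf : MonotoneOn f (Set.Ici 0)) (hf0 : f 0 = 0)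
    (hpos : ∀ t > 0, 0 < f t) {c : ℝ} (hΔ2 : ∀ t ≥ (0 : ℝ), phiOf f (2 * t) ≤ c * phiOf f t) :
    0 < c := by
  have h := hΔ2 1 zero_le_one
  rw [mul_one] at h
  exact pos_of_mul_pos_left ((phiOf_pos hf hf0 hpos two_pos).trans_le h)
    (phiOf_pos hf hf0 hpos one_pos).le

lemma two_mul_apply_two_mul_le_of_phiOf_doubling (hf : MonotoneOn f (Set.Ici 0))
    (hf0 : f 0 = 0) {c : ℝ} (hc : 0 ≤ c) (hΔ2 : ∀ t ≥ (0 : ℝ), phiOf f (2 * t) ≤ c * phiOf f t)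
    {s : ℝ} (hs : 0 < s) : 2 * f (2 * s) ≤ c ^ 2 * f s := by
  have hchain : 2 * s * f (2 * s) ≤ c ^ 2 * (s * f s) :=
    calc 2 * s * f (2 * s) ≤ phiOf f (2 * (2 * s)) := mul_apply_le_phiOf_two_mul hf hf0 (by linarith)
      _ ≤ c * phiOf f (2 * s) := hΔ2 _ (by linarith)
      _ ≤ c * (c * phiOf f s) := mul_le_mul_of_nonneg_left (hΔ2 s hs.le) hc
      _ ≤ c ^ 2 * (s * f s) := by
        rw [← mul_assoc, ← sq]
        exact mul_le_mul_of_nonneg_left (phiOf_le_mul_apply hf hs.le) (sq_nonneg c)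
  nlinarith

lemma shiftedDeriv_two_mul_le (hf : MonotoneOn f (Set.Ici 0)) (hf0 : f 0 = 0) {K : ℝ}
    (hK : ∀ s > 0, 2 * f (2 * s) ≤ K * f s) {lam t : ℝ} (hlam : 0 ≤ lam) (ht : 0 ≤ t) :
    shiftedDeriv f lam (2 * t) ≤ K * shiftedDeriv f lam t := by
  rcases ht.eq_or_lt with rfl | ht
  · simp [shiftedDeriv]
  have hpos : 0 < lam + t := by linarith
  have hle : f (lam + 2 * t) ≤ f (2 * (lam + t)) :=
    hf (Set.mem_Ici.2 (by linarith)) (Set.mem_Ici.2 (by linarith)) (by linarith)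
  calc f (lam + 2 * t) / (lam + 2 * t) * (2 * t)
      ≤ f (lam + 2 * t) / (lam + t) * (2 * t) := by
        gcongr
        · exact nonneg_of_monotoneOn_Ici hf hf0 (by linarith)
        · linarith
    _ ≤ f (2 * (lam + t)) / (lam + t) * (2 * t) := by gcongr
    _ = 2 * f (2 * (lam + t)) * (t / (lam + t)) := by ring
    _ ≤ K * f (lam + t) * (t / (lam + t)) :=
        mul_le_mul_of_nonneg_right (hK _ hpos) (by positivity)
    _ = K * (f (lam + t) / (lam + t) * t) := by ring

end MonotoneDeriv

theorem shifted_delta2_uniform_general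
    (φ' : ℝ → ℝ) (cφ : ℝ) (hN : IsNFunctionDeriv φ')
    (hΔ2 : ∀ t ≥ (0 : ℝ), phiOf φ' (2 * t) ≤ cφ * phiOf φ' t) :
    ∃ K > (0 : ℝ), ∀ lam ≥ (0 : ℝ), ∀ t ≥ (0 : ℝ),
      shiftedDeriv φ' lam (2 * t) ≤ K * shiftedDeriv φ' lam t := by
  have hcφ : 0 < cφ := pos_of_phiOf_doubling hN.mono hN.zero hN.pos hΔ2
  refine ⟨cφ ^ 2, by positivity, fun lam hlam t ht => ?_⟩
  exact shiftedDeriv_two_mul_le hN.mono hN.zero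
    (fun s hs => two_mul_apply_two_mul_le_of_phiOf_doubling hN.mono hN.zero hcφ.le hΔ2 hs) hlam ht

/-- The Δ₂-constants of the shifted N-functions are bounded uniformly in the shift. -/
theorem shifted_delta2_uniform
    (φ' : ℝ → ℝ) (cφ cψ : ℝ) (hN : IsNFunctionDeriv φ')
    (hΔ2 : ∀ t ≥ (0 : ℝ), phiOf φ' (2 * t) ≤ cφ * phiOf φ' t)
    (hΔ2conj : ∀ t ≥ (0 : ℝ), phiConj φ' (2 * t) ≤ cψ * phiConj φ' t) :
    ∃ K > (0 : ℝ), ∀ lam ≥ (0 : ℝ), ∀ t ≥ (0 : ℝ),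
      shiftedDeriv φ' lam (2 * t) ≤ K * shiftedDeriv φ' lam t :=
  shifted_delta2_uniform_general φ' cφ hN hΔ2
end

section
/- Let $\phi$ be an N-function with $\Delta_2(\{\phi, \phi^*\}) < \infty$ and let $\phi_\lambda$ be the shifted N-function with $\phi_\lambda'(t) = \frac{\phi'(\lambda+t)}{\lambda+t}t$. Then $\phi_\lambda(k\lambda) \sim k^2 \phi(\lambda)$ uniformly in $0 \le k \le 1$ and $\lambda > 0$, with constants depending only on the $\Delta_2$ constants of $\phi$ and $\phi^*$. -/
open MeasureTheory Filter

/-- The shifted N-function `φ_λ(t) = ∫₀ᵗ φ'_λ(s) ds`. -/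
noncomputable def shiftedPhi (φ' : ℝ → ℝ) (lam t : ℝ) : ℝ :=
  ∫ s in (0 : ℝ)..t, shiftedDeriv φ' lam s

/-!
On `[0, λ]` the shifted derivative `φ'(λ + s) s / (λ + s)` lies between the linear functions
`φ'(λ) s / (2λ)` and `φ'(2λ) s / λ`, so `φ_λ(kλ)` lies between `k² λ φ'(λ) / 4` and
`k² · 2λ φ'(2λ) / 4`. Monotonicity of `φ'` gives `φ(λ) ≤ λ φ'(λ)` and `2λ φ'(2λ) ≤ φ(4λ)`,
and two applications of `Δ₂` give `φ(4λ) ≤ Δ₂(φ)² φ(λ)`.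
-/

open Set intervalIntegral

section Monotone

variable {f : ℝ → ℝ} {a b : ℝ}

lemma MonotoneOn.intervalIntegrable_of_Icc (hf : MonotoneOn f (Icc a b)) (hab : a ≤ b) :
    IntervalIntegrable f volume a b :=
  MonotoneOn.intervalIntegrable (by rwa [uIcc_of_le hab])

lemma MonotoneOn.sub_mul_le_integral (hf : MonotoneOn f (Icc a b)) (hab : a ≤ b) :
    (b - a) * f a ≤ ∫ x in a..b, f x := by
  simpa using integral_mono_on hab intervalIntegrable_const (hf.intervalIntegrable_of_Icc hab)
    fun x hx => hf (left_mem_Icc.2 hab) hx hx.1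

lemma MonotoneOn.integral_le_sub_mul (hf : MonotoneOn f (Icc a b)) (hab : a ≤ b) :
    ∫ x in a..b, f x ≤ (b - a) * f b := by
  simpa using integral_mono_on hab (hf.intervalIntegrable_of_Icc hab) intervalIntegrable_const
    fun x hx => hf hx (right_mem_Icc.2 hab) hx.2

end Monotone

section Linear

lemma integral_const_mul_id (b c : ℝ) : ∫ x in (0 : ℝ)..b, c * x = c * b ^ 2 / 2 := by
  rw [intervalIntegral.integral_const_mul, integral_id]
  ring

variable {g : ℝ → ℝ} {b c : ℝ}

lemma mul_sq_div_two_le_integral (hb : 0 ≤ b) (hg : IntervalIntegrable g volume 0 b)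
    (h : ∀ x ∈ Icc 0 b, c * x ≤ g x) : c * b ^ 2 / 2 ≤ ∫ x in (0 : ℝ)..b, g x :=
  integral_const_mul_id b c ▸
    integral_mono_on hb (intervalIntegrable_id.const_mul c) hg h

lemma integral_le_mul_sq_div_two (hb : 0 ≤ b) (hg : IntervalIntegrable g volume 0 b)
    (h : ∀ x ∈ Icc 0 b, g x ≤ c * x) : ∫ x in (0 : ℝ)..b, g x ≤ c * b ^ 2 / 2 :=
  integral_const_mul_id b c ▸
    integral_mono_on hb hg (intervalIntegrable_id.const_mul c) h

end Linear

namespace IsNFunctionDeriv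

variable {φ' : ℝ → ℝ} {cφ t lam : ℝ}

lemma monotoneOn_Icc (hN : IsNFunctionDeriv φ') {a b : ℝ} (ha : 0 ≤ a) :
    MonotoneOn φ' (Icc a b) :=
  hN.mono.mono fun _ hx => ha.trans hx.1

lemma nonneg (hN : IsNFunctionDeriv φ') (ht : 0 ≤ t) : 0 ≤ φ' t :=
  hN.zero ▸ hN.mono self_mem_Ici ht ht

lemma phiOf_pos (hN : IsNFunctionDeriv φ') (ht : 0 < t) : 0 < phiOf φ' t :=
  intervalIntegral_pos_of_pos_on ((hN.monotoneOn_Icc le_rfl).intervalIntegrable_of_Icc ht.le)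
    (fun x hx => hN.pos x hx.1) ht

lemma phiOf_le_mul (hN : IsNFunctionDeriv φ') (ht : 0 ≤ t) : phiOf φ' t ≤ t * φ' t := by
  simpa [phiOf] using (hN.monotoneOn_Icc le_rfl).integral_le_sub_mul ht

lemma mul_le_phiOf_two_mul (hN : IsNFunctionDeriv φ') (ht : 0 ≤ t) :
    t * φ' t ≤ phiOf φ' (2 * t) := by
  have hsplit : phiOf φ' (2 * t) = phiOf φ' t + ∫ s in t..2 * t, φ' s :=
    (integral_add_adjacent_intervals
      ((hN.monotoneOn_Icc le_rfl).intervalIntegrable_of_Icc ht)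
      ((hN.monotoneOn_Icc ht).intervalIntegrable_of_Icc (by linarith))).symm
  have htail := (hN.monotoneOn_Icc (b := 2 * t) ht).sub_mul_le_integral (by linarith)
  have hhead : 0 ≤ phiOf φ' t := integral_nonneg ht fun s hs => hN.nonneg hs.1
  linarith

lemma delta2_const_pos (hN : IsNFunctionDeriv φ')
    (hΔ2 : ∀ t ≥ (0 : ℝ), phiOf φ' (2 * t) ≤ cφ * phiOf φ' t) : 0 < cφ := by
  have h := hΔ2 1 zero_le_one
  rw [mul_one] at h
  exact pos_of_mul_pos_left ((hN.phiOf_pos two_pos).trans_le h) (hN.phiOf_pos one_pos).le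

lemma phiOf_four_mul_le (hN : IsNFunctionDeriv φ')
    (hΔ2 : ∀ t ≥ (0 : ℝ), phiOf φ' (2 * t) ≤ cφ * phiOf φ' t) (ht : 0 ≤ t) :
    phiOf φ' (4 * t) ≤ cφ ^ 2 * phiOf φ' t :=
  calc phiOf φ' (4 * t) = phiOf φ' (2 * (2 * t)) := by ring_nf
    _ ≤ cφ * phiOf φ' (2 * t) := hΔ2 _ (by linarith)
    _ ≤ cφ * (cφ * phiOf φ' t) :=
        mul_le_mul_of_nonneg_left (hΔ2 t ht) (hN.delta2_const_pos hΔ2).le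
    _ = cφ ^ 2 * phiOf φ' t := by ring

lemma monotoneOn_shiftedDeriv (hN : IsNFunctionDeriv φ') (hlam : 0 < lam) :
    MonotoneOn (shiftedDeriv φ' lam) (Ici 0) := by
  have hshift : MonotoneOn (fun s => φ' (lam + s)) (Ici 0) := fun x hx y hy hxy =>
    hN.mono (mem_Ici.2 (by linarith [mem_Ici.1 hx])) (mem_Ici.2 (by linarith [mem_Ici.1 hy]))
      (by linarith)
  have hratio : MonotoneOn (fun s => s / (lam + s)) (Ici 0) := fun x hx y hy hxy => by
    rw [mem_Ici] at hx hy
    rw [div_le_div_iff₀ (by linarith) (by linarith)]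
    nlinarith
  convert hshift.mul hratio (fun s hs => hN.nonneg (by linarith [mem_Ici.1 hs]))
    (fun s hs => div_nonneg hs (by linarith [mem_Ici.1 hs])) using 1
  ext s
  simp only [shiftedDeriv, Pi.mul_apply]
  ring

lemma mul_le_shiftedDeriv (hN : IsNFunctionDeriv φ') (hlam : 0 < lam) {s : ℝ}
    (hs : s ∈ Icc 0 lam) : φ' lam / (2 * lam) * s ≤ shiftedDeriv φ' lam s := by
  obtain ⟨hs0, hslam⟩ := hs
  have hφ : φ' lam ≤ φ' (lam + s) := hN.mono hlam.le (mem_Ici.2 (by linarith)) (by linarith)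
  exact mul_le_mul_of_nonneg_right
    (div_le_div₀ (hN.nonneg (by linarith)) hφ (by linarith) (by linarith)) hs0

lemma shiftedDeriv_le_mul (hN : IsNFunctionDeriv φ') (hlam : 0 < lam) {s : ℝ}
    (hs : s ∈ Icc 0 lam) : shiftedDeriv φ' lam s ≤ φ' (2 * lam) / lam * s := by
  obtain ⟨hs0, hslam⟩ := hs
  have hφ : φ' (lam + s) ≤ φ' (2 * lam) := hN.mono (mem_Ici.2 (by linarith))
    (mem_Ici.2 (by linarith)) (by linarith)
  exact mul_le_mul_of_nonneg_right
    (div_le_div₀ (hN.nonneg (by linarith)) hφ hlam (by linarith)) hs0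

lemma mul_sq_le_shiftedPhi (hN : IsNFunctionDeriv φ') (hlam : 0 < lam) {b : ℝ}
    (hb : b ∈ Icc 0 lam) : φ' lam / (4 * lam) * b ^ 2 ≤ shiftedPhi φ' lam b := by
  have h := mul_sq_div_two_le_integral hb.1
    (((hN.monotoneOn_shiftedDeriv hlam).mono Icc_subset_Ici_self).intervalIntegrable_of_Icc hb.1)
    fun s hs => hN.mul_le_shiftedDeriv hlam ⟨hs.1, hs.2.trans hb.2⟩
  calc φ' lam / (4 * lam) * b ^ 2 = φ' lam / (2 * lam) * b ^ 2 / 2 := by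
        field_simp; ring
    _ ≤ shiftedPhi φ' lam b := h

lemma shiftedPhi_le_mul_sq (hN : IsNFunctionDeriv φ') (hlam : 0 < lam) {b : ℝ}
    (hb : b ∈ Icc 0 lam) : shiftedPhi φ' lam b ≤ φ' (2 * lam) / (2 * lam) * b ^ 2 := by
  have h := integral_le_mul_sq_div_two hb.1
    (((hN.monotoneOn_shiftedDeriv hlam).mono Icc_subset_Ici_self).intervalIntegrable_of_Icc hb.1)
    fun s hs => hN.shiftedDeriv_le_mul hlam ⟨hs.1, hs.2.trans hb.2⟩
  calc shiftedPhi φ' lam b ≤ φ' (2 * lam) / lam * b ^ 2 / 2 := h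
    _ = φ' (2 * lam) / (2 * lam) * b ^ 2 := by field_simp

end IsNFunctionDeriv

theorem shifted_phi_at_k_lambda_general
    (φ' : ℝ → ℝ) (cφ : ℝ) (hN : IsNFunctionDeriv φ')
    (hΔ2 : ∀ t ≥ (0 : ℝ), phiOf φ' (2 * t) ≤ cφ * phiOf φ' t) :
    ∃ c₁ > (0 : ℝ), ∃ c₂ > (0 : ℝ), ∀ k ∈ Set.Icc (0 : ℝ) 1, ∀ lam > (0 : ℝ),
      c₁ * (k ^ 2 * phiOf φ' lam) ≤ shiftedPhi φ' lam (k * lam) ∧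
      shiftedPhi φ' lam (k * lam) ≤ c₂ * (k ^ 2 * phiOf φ' lam) := by
  have hcφ := hN.delta2_const_pos hΔ2
  refine ⟨1 / 4, by norm_num, cφ ^ 2 / 4, by positivity, ?_⟩
  rintro k ⟨hk0, hk1⟩ lam (hlam : 0 < lam)
  have hk : k * lam ∈ Icc 0 lam := ⟨by positivity, mul_le_of_le_one_left hlam.le hk1⟩
  constructor
  · calc 1 / 4 * (k ^ 2 * phiOf φ' lam) ≤ 1 / 4 * (k ^ 2 * (lam * φ' lam)) := by
          gcongr; exact hN.phiOf_le_mul hlam.le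
      _ = φ' lam / (4 * lam) * (k * lam) ^ 2 := by field_simp
      _ ≤ shiftedPhi φ' lam (k * lam) := hN.mul_sq_le_shiftedPhi hlam hk
  · calc shiftedPhi φ' lam (k * lam) ≤ φ' (2 * lam) / (2 * lam) * (k * lam) ^ 2 :=
          hN.shiftedPhi_le_mul_sq hlam hk
      _ = k ^ 2 / 4 * (2 * lam * φ' (2 * lam)) := by field_simp; ring
      _ ≤ k ^ 2 / 4 * phiOf φ' (4 * lam) := by
          gcongr
          exact (hN.mul_le_phiOf_two_mul (by positivity)).trans_eq (congrArg _ (by ring))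
      _ ≤ k ^ 2 / 4 * (cφ ^ 2 * phiOf φ' lam) := by
          gcongr; exact hN.phiOf_four_mul_le hΔ2 hlam.le
      _ = cφ ^ 2 / 4 * (k ^ 2 * phiOf φ' lam) := by ring

/-- `φ_λ(kλ) ∼ k² φ(λ)` uniformly in `0 ≤ k ≤ 1` and `λ > 0`. -/
theorem shifted_phi_at_k_lambda
    (φ' : ℝ → ℝ) (cφ cψ : ℝ) (hN : IsNFunctionDeriv φ')
    (hΔ2 : ∀ t ≥ (0 : ℝ), phiOf φ' (2 * t) ≤ cφ * phiOf φ' t)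
    (hΔ2conj : ∀ t ≥ (0 : ℝ), phiConj φ' (2 * t) ≤ cψ * phiConj φ' t) :
    ∃ c₁ > (0 : ℝ), ∃ c₂ > (0 : ℝ), ∀ k ∈ Set.Icc (0 : ℝ) 1, ∀ lam > (0 : ℝ),
      c₁ * (k ^ 2 * phiOf φ' lam) ≤ shiftedPhi φ' lam (k * lam) ∧
      shiftedPhi φ' lam (k * lam) ≤ c₂ * (k ^ 2 * phiOf φ' lam) :=
  shifted_phi_at_k_lambda_general φ' cφ hN hΔ2
end

section
/- Let $\phi$ be an N-function with $\Delta_2(\{\phi, \phi^*\}) < \infty$ satisfying $\phi'(t) \sim t\phi''(t)$. For $P, Q \in \mathbb{R}^{n\times m}$ define $\phi'_{|P|}(t) = \frac{\phi'(|P| + t)}{|P| + t} t$. Then $\phi''(|P| + |Q|)\,|P - Q| \sim \phi'_{|P|}(|P - Q|)$ uniformly in $P, Q$ (not both zero), with constants depending only on the $\Delta_2$ constants and the constants in the assumption. -/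
open MeasureTheory Filter

/-!
Put `s = |P| + |Q|` and `u = |P| + |P - Q|`. By the triangle inequality `u ≤ 2s` and `s ≤ 2u`.
The upper bound `t φ''(t) ≤ a₂ φ'(t)` makes `φ'(t) t^(-a₂)` antitone, so `φ'` is doubling, and
together with monotonicity this makes `φ'(t)/t` comparable at `s` and `u`. Finally
`φ''(s) ∼ φ'(s)/s` by assumption, and `φ'_{|P|}(|P - Q|) = (φ'(u)/u) |P - Q|`.
-/

section Geometry

variable {E : Type*} [SeminormedAddCommGroup E]

lemma norm_add_norm_sub_le_two_mul (P Q : E) : ‖P‖ + ‖P - Q‖ ≤ 2 * (‖P‖ + ‖Q‖) := by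
  linarith [norm_sub_le P Q, norm_nonneg P, norm_nonneg Q]

lemma norm_add_norm_le_two_mul (P Q : E) : ‖P‖ + ‖Q‖ ≤ 2 * (‖P‖ + ‖P - Q‖) := by
  have hQ : ‖Q‖ ≤ ‖P‖ + ‖P - Q‖ := by
    simpa using norm_sub_le P (P - Q)
  linarith [norm_nonneg (P - Q)]

end Geometry

lemma norm_add_norm_pos {E : Type*} [NormedAddGroup E] {P Q : E} (h : ¬(P = 0 ∧ Q = 0)) :
    0 < ‖P‖ + ‖Q‖ := by
  rcases not_and_or.1 h with hP | hQ
  · linarith [norm_pos_iff.2 hP, norm_nonneg Q]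
  · linarith [norm_pos_iff.2 hQ, norm_nonneg P]

section Growth

variable {f f' : ℝ → ℝ} {a : ℝ}

lemma antitoneOn_mul_rpow_neg (hf : ∀ x > 0, HasDerivAt f (f' x) x)
    (h : ∀ x > 0, x * f' x ≤ a * f x) :
    AntitoneOn (fun x => f x * x ^ (-a)) (Set.Ioi 0) := by
  have hderiv : ∀ x > 0,
      HasDerivAt (fun x => f x * x ^ (-a)) (x ^ (-a - 1) * (x * f' x - a * f x)) x := by
    intro x hx
    have hpow : x ^ (-a) = x ^ (-a - 1) * x := by
      rw [← Real.rpow_add_one hx.ne']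
      ring_nf
    refine ((hf x hx).mul (Real.hasDerivAt_rpow_const (p := -a) (Or.inl hx.ne'))).congr_deriv ?_
    rw [hpow]
    ring
  apply antitoneOn_of_deriv_nonpos (convex_Ioi 0)
  · exact fun x hx => (hderiv x hx).continuousAt.continuousWithinAt
  · rw [interior_Ioi]
    exact fun x hx => (hderiv x hx).differentiableAt.differentiableWithinAt
  · rw [interior_Ioi]
    intro x hx
    rw [(hderiv x hx).deriv]
    exact mul_nonpos_of_nonneg_of_nonpos (Real.rpow_nonneg hx.le _) (sub_nonpos.2 (h x hx))

lemma le_div_rpow_mul_of_mul_deriv_le (hf : ∀ x > 0, HasDerivAt f (f' x) x)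
    (h : ∀ x > 0, x * f' x ≤ a * f x) {s u : ℝ} (hs : 0 < s) (hsu : s ≤ u) :
    f u ≤ (u / s) ^ a * f s := by
  have hu : 0 < u := hs.trans_le hsu
  have hanti : f u * u ^ (-a) ≤ f s * s ^ (-a) := antitoneOn_mul_rpow_neg hf h hs hu hsu
  calc f u = f u * u ^ (-a) * u ^ a := by
        rw [mul_assoc, ← Real.rpow_add hu, neg_add_cancel, Real.rpow_zero, mul_one]
    _ ≤ f s * s ^ (-a) * u ^ a := by gcongr
    _ = (u / s) ^ a * f s := by
        rw [Real.div_rpow hu.le hs.le, Real.rpow_neg hs.le]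
        ring

end Growth

lemma div_le_two_mul_div_of_doubling {g : ℝ → ℝ} {K : ℝ} (hmono : MonotoneOn g (Set.Ici 0))
    (hnonneg : ∀ t > 0, 0 ≤ g t) (hdouble : ∀ t > 0, g (2 * t) ≤ K * g t)
    {s u : ℝ} (hs : 0 < s) (hu : 0 < u) (hus : u ≤ 2 * s) (hsu : s ≤ 2 * u) :
    g u / u ≤ 2 * K * (g s / s) := by
  have hgu : g u ≤ K * g s :=
    (hmono (Set.mem_Ici.2 hu.le) (Set.mem_Ici.2 (by linarith)) hus).trans (hdouble s hs)
  have hKg : 0 ≤ K * g s := (hnonneg (2 * s) (by positivity)).trans (hdouble s hs)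
  calc g u / u ≤ K * g s / u := by gcongr
    _ ≤ K * g s / (s / 2) := by gcongr; linarith
    _ = 2 * K * (g s / s) := by field_simp

lemma IsNFunctionDeriv.le_of_mul_deriv_bounds {φ' φ'' : ℝ → ℝ} {a₁ a₂ : ℝ}
    (hN : IsNFunctionDeriv φ')
    (hassum : ∀ t > (0 : ℝ), a₁ * φ' t ≤ t * φ'' t ∧ t * φ'' t ≤ a₂ * φ' t) : a₁ ≤ a₂ :=
  le_of_mul_le_mul_right ((hassum 1 one_pos).1.trans (hassum 1 one_pos).2) (hN.pos 1 one_pos)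

lemma second_deriv_comparable {φ' φ'' : ℝ → ℝ} {a₁ a₂ : ℝ} (hN : IsNFunctionDeriv φ')
    (hderiv : ∀ t > (0 : ℝ), HasDerivAt φ' (φ'' t) t) (ha₁ : 0 ≤ a₁)
    (hassum : ∀ t > (0 : ℝ), a₁ * φ' t ≤ t * φ'' t ∧ t * φ'' t ≤ a₂ * φ' t)
    {s u : ℝ} (hs : 0 < s) (hu : 0 < u) (hus : u ≤ 2 * s) (hsu : s ≤ 2 * u) :
    a₁ * (φ' u / u) ≤ 2 * 2 ^ a₂ * φ'' s ∧ φ'' s ≤ a₂ * (2 * 2 ^ a₂) * (φ' u / u) := by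
  have hdouble : ∀ t > 0, φ' (2 * t) ≤ 2 ^ a₂ * φ' t := fun t ht => by
    simpa [ht.ne'] using le_div_rpow_mul_of_mul_deriv_le hderiv (fun x hx => (hassum x hx).2)
      ht (by linarith : t ≤ 2 * t)
  have hnonneg : ∀ t > 0, 0 ≤ φ' t := fun t ht => (hN.pos t ht).le
  have hlow : a₁ * (φ' s / s) ≤ φ'' s := by
    rw [mul_div_assoc', div_le_iff₀ hs]
    linarith [(hassum s hs).1]
  have hupp : φ'' s ≤ a₂ * (φ' s / s) := by
    rw [mul_div_assoc', le_div_iff₀ hs]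
    linarith [(hassum s hs).2]
  constructor
  · calc a₁ * (φ' u / u) ≤ a₁ * (2 * 2 ^ a₂ * (φ' s / s)) := by
          gcongr; exact div_le_two_mul_div_of_doubling hN.mono hnonneg hdouble hs hu hus hsu
      _ = 2 * 2 ^ a₂ * (a₁ * (φ' s / s)) := by ring
      _ ≤ 2 * 2 ^ a₂ * φ'' s := by gcongr
  · have ha₂ : 0 ≤ a₂ := ha₁.trans (hN.le_of_mul_deriv_bounds hassum)
    calc φ'' s ≤ a₂ * (φ' s / s) := hupp
      _ ≤ a₂ * (2 * 2 ^ a₂ * (φ' u / u)) := by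
          gcongr; exact div_le_two_mul_div_of_doubling hN.mono hnonneg hdouble hu hs hsu hus
      _ = a₂ * (2 * 2 ^ a₂) * (φ' u / u) := by ring

theorem shifted_deriv_equiv_second_deriv_general
    (n m : ℕ) (φ' φ'' : ℝ → ℝ) (a₁ a₂ : ℝ) (hN : IsNFunctionDeriv φ')
    (hderiv : ∀ t > (0 : ℝ), HasDerivAt φ' (φ'' t) t)
    (ha₁ : 0 < a₁)
    (hassum : ∀ t > (0 : ℝ), a₁ * φ' t ≤ t * φ'' t ∧ t * φ'' t ≤ a₂ * φ' t) :
    ∃ c₁ > (0 : ℝ), ∃ c₂ > (0 : ℝ),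
      ∀ P Q : EuclideanSpace ℝ (Fin n × Fin m), ¬(P = 0 ∧ Q = 0) →
        c₁ * shiftedDeriv φ' (‖P‖) (‖P - Q‖) ≤ φ'' (‖P‖ + ‖Q‖) * ‖P - Q‖ ∧
        φ'' (‖P‖ + ‖Q‖) * ‖P - Q‖ ≤ c₂ * shiftedDeriv φ' (‖P‖) (‖P - Q‖) := by
  have ha₂ : 0 < a₂ := ha₁.trans_le (hN.le_of_mul_deriv_bounds hassum)
  set K : ℝ := 2 * 2 ^ a₂
  have hK : 0 < K := by positivity
  refine ⟨a₁ / K, div_pos ha₁ hK, a₂ * K, mul_pos ha₂ hK, fun P Q hPQ => ?_⟩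
  have hs := norm_add_norm_pos hPQ
  have hu : 0 < ‖P‖ + ‖P - Q‖ := by linarith [norm_add_norm_le_two_mul P Q]
  obtain ⟨hlow, hupp⟩ := second_deriv_comparable hN hderiv ha₁.le hassum hs hu
    (norm_add_norm_sub_le_two_mul P Q) (norm_add_norm_le_two_mul P Q)
  simp only [shiftedDeriv, ← mul_assoc]
  constructor <;> gcongr
  rwa [div_mul_eq_mul_div, div_le_iff₀' hK]

/-- `φ''(|P|+|Q|)|P−Q| ∼ φ'_{|P|}(|P−Q|)` uniformly in matrices `P, Q` (Frobenius norm,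
realized as the Euclidean norm on the entries). -/
theorem shifted_deriv_equiv_second_deriv
    (n m : ℕ) (φ' φ'' : ℝ → ℝ) (cφ cψ a₁ a₂ : ℝ) (hN : IsNFunctionDeriv φ')
    (hΔ2 : ∀ t ≥ (0 : ℝ), phiOf φ' (2 * t) ≤ cφ * phiOf φ' t)
    (hΔ2conj : ∀ t ≥ (0 : ℝ), phiConj φ' (2 * t) ≤ cψ * phiConj φ' t)
    (hderiv : ∀ t > (0 : ℝ), HasDerivAt φ' (φ'' t) t)
    (ha₁ : 0 < a₁)
    (hassum : ∀ t > (0 : ℝ), a₁ * φ' t ≤ t * φ'' t ∧ t * φ'' t ≤ a₂ * φ' t) :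
    ∃ c₁ > (0 : ℝ), ∃ c₂ > (0 : ℝ),
      ∀ P Q : EuclideanSpace ℝ (Fin n × Fin m), ¬(P = 0 ∧ Q = 0) →
        c₁ * shiftedDeriv φ' (‖P‖) (‖P - Q‖) ≤ φ'' (‖P‖ + ‖Q‖) * ‖P - Q‖ ∧
        φ'' (‖P‖ + ‖Q‖) * ‖P - Q‖ ≤ c₂ * shiftedDeriv φ' (‖P‖) (‖P - Q‖) :=
  shifted_deriv_equiv_second_deriv_general n m φ' φ'' a₁ a₂ hN hderiv ha₁ hassum
end

section
/- Let $\phi$ be an N-function with $\Delta_2(\{\phi,\phi^*\}) < \infty$ satisfying $\phi'(t) \sim t\phi''(t)$. Define $\phi'_\lambda(t) = \frac{\phi'(\lambda+t)}{\lambda+t} t$. Then there is a constant $K$ such that for all $P, Q, R \in \mathbb{R}^{n\times m}$: $\phi'_{|P|}(|P - Q|) \le K\big(\phi'_{|R|}(|P - R|) + \phi'_{|R|}(|Q - R|)\big)$. -/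
open MeasureTheory Filter

/-!
Write `M = max (|P - R|, |Q - R|)`. The bound `t φ''(t) ≤ a₂ φ'(t)` makes `φ'(t) t^{-a₂}` decreasing,
so `φ'` is doubling, and hence so is `t ↦ φ'_λ(t)`, uniformly in `λ`. The same doubling lets one
replace the shift `λ` in `φ'_λ(M)` by any `μ` with `|λ - μ| ≤ M`, at the cost of a constant factor.
Since `|P - Q| ≤ 2M` and `||P| - |R|| ≤ M`, this gives
`φ'_{|P|}(|P - Q|) ≲ φ'_{|P|}(M) ≲ φ'_{|R|}(M) ≤ φ'_{|R|}(|P - R|) + φ'_{|R|}(|Q - R|)`.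
-/

open Set

theorem antitoneOn_mul_rpow_neg_of_mul_deriv_le {f f' : ℝ → ℝ} {a : ℝ}
    (hf : ∀ t > 0, HasDerivAt f (f' t) t) (hbd : ∀ t > 0, t * f' t ≤ a * f t) :
    AntitoneOn (fun x => f x * x ^ (-a)) (Ioi 0) := by
  have hderiv : ∀ x ∈ Ioi (0 : ℝ), HasDerivAt (fun x => f x * x ^ (-a))
      (f' x * x ^ (-a) + f x * (-a * x ^ (-a - 1))) x := fun x hx =>
    (hf x hx).mul (Real.hasDerivAt_rpow_const (Or.inl (ne_of_gt hx)))
  refine antitoneOn_of_hasDerivWithinAt_nonpos (convex_Ioi 0)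
    (f' := fun x => f' x * x ^ (-a) + f x * (-a * x ^ (-a - 1)))
    (fun x hx => (hderiv x hx).continuousAt.continuousWithinAt) ?_ ?_
  · rw [interior_Ioi]
    exact fun x hx => (hderiv x hx).hasDerivWithinAt
  · rw [interior_Ioi]
    intro x (hx : 0 < x)
    have hfactor : f' x * x ^ (-a) + f x * (-a * x ^ (-a - 1))
        = x ^ (-a) / x * (x * f' x - a * f x) := by
      rw [Real.rpow_sub_one hx.ne']
      field_simp
      ring
    rw [hfactor]
    exact mul_nonpos_of_nonneg_of_nonpos (by positivity) (by linarith [hbd x hx])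

theorem le_rpow_mul_of_mul_deriv_le {f f' : ℝ → ℝ} {a s c : ℝ}
    (hf : ∀ t > 0, HasDerivAt f (f' t) t) (hbd : ∀ t > 0, t * f' t ≤ a * f t)
    (hs : 0 < s) (hc : 1 ≤ c) : f (c * s) ≤ c ^ a * f s := by
  have hcs : 0 < c * s := by positivity
  have key : f (c * s) * (c * s) ^ (-a) ≤ f s * s ^ (-a) :=
    antitoneOn_mul_rpow_neg_of_mul_deriv_le hf hbd hs hcs (le_mul_of_one_le_left hs.le hc)
  rw [Real.rpow_neg hcs.le, Real.rpow_neg hs.le, ← div_eq_mul_inv, ← div_eq_mul_inv,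
    div_le_div_iff₀ (by positivity) (by positivity), Real.mul_rpow (by linarith) hs.le] at key
  nlinarith [Real.rpow_pos_of_pos hs a]

theorem IsNFunctionDeriv.nonneg_s12 {φ' : ℝ → ℝ} (hN : IsNFunctionDeriv φ') :
    ∀ t ≥ 0, 0 ≤ φ' t :=
  fun _ ht => hN.zero ▸ hN.mono self_mem_Ici ht ht

section ShiftedDeriv

variable {φ' : ℝ → ℝ} {D l μ t M : ℝ}

theorem shiftedDeriv_eq_mul_div (φ' : ℝ → ℝ) (l t : ℝ) :
    shiftedDeriv φ' l t = φ' (l + t) * (t / (l + t)) := by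
  unfold shiftedDeriv
  ring

theorem shiftedDeriv_zero_right (φ' : ℝ → ℝ) (l : ℝ) : shiftedDeriv φ' l 0 = 0 := by
  simp [shiftedDeriv]

theorem shiftedDeriv_nonneg (hnn : ∀ t ≥ 0, 0 ≤ φ' t) (hl : 0 ≤ l) (ht : 0 ≤ t) :
    0 ≤ shiftedDeriv φ' l t := by
  rw [shiftedDeriv_eq_mul_div]
  have := hnn (l + t) (by linarith)
  positivity

theorem shiftedDeriv_monotoneOn (hmono : MonotoneOn φ' (Ici 0)) (hnn : ∀ t ≥ 0, 0 ≤ φ' t)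
    (hl : 0 ≤ l) : MonotoneOn (shiftedDeriv φ' l) (Ici 0) := by
  intro t (ht : 0 ≤ t) t' (ht' : 0 ≤ t') htt'
  rcases ht.eq_or_lt with rfl | ht
  · rw [shiftedDeriv_zero_right]
    exact shiftedDeriv_nonneg hnn hl ht'
  have hφ : φ' (l + t) ≤ φ' (l + t') :=
    hmono (mem_Ici.2 (by linarith)) (mem_Ici.2 (by linarith)) (by linarith)
  have hfrac : t / (l + t) ≤ t' / (l + t') := by
    rw [div_le_div_iff₀ (by linarith) (by linarith)]
    nlinarith
  rw [shiftedDeriv_eq_mul_div, shiftedDeriv_eq_mul_div]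
  exact mul_le_mul hφ hfrac (by positivity) (hnn _ (by linarith))

theorem shiftedDeriv_two_mul_le_s12 (hmono : MonotoneOn φ' (Ici 0)) (hnn : ∀ t ≥ 0, 0 ≤ φ' t)
    (hD : ∀ s > 0, φ' (2 * s) ≤ D * φ' s) (hl : 0 ≤ l) (hM : 0 ≤ M) :
    shiftedDeriv φ' l (2 * M) ≤ 2 * D * shiftedDeriv φ' l M := by
  rcases hM.eq_or_lt with rfl | hM
  · simp [shiftedDeriv_zero_right]
  have hφ : φ' (l + 2 * M) ≤ D * φ' (l + M) :=
    (hmono (mem_Ici.2 (by linarith)) (mem_Ici.2 (by linarith)) (by linarith)).trans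
      (hD (l + M) (by linarith))
  have hfrac : 2 * M / (l + 2 * M) ≤ 2 * (M / (l + M)) := by
    rw [← mul_div_assoc]
    exact div_le_div_of_nonneg_left (by positivity) (by linarith) (by linarith)
  rw [shiftedDeriv_eq_mul_div, shiftedDeriv_eq_mul_div]
  calc φ' (l + 2 * M) * (2 * M / (l + 2 * M)) ≤ D * φ' (l + M) * (2 * (M / (l + M))) :=
        mul_le_mul hφ hfrac (by positivity) (hφ.trans' (hnn _ (by linarith)))
    _ = 2 * D * (φ' (l + M) * (M / (l + M))) := by ring

theorem shiftedDeriv_le_of_abs_sub_le (hmono : MonotoneOn φ' (Ici 0))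
    (hnn : ∀ t ≥ 0, 0 ≤ φ' t) (hD : ∀ s > 0, φ' (2 * s) ≤ D * φ' s)
    (hl : 0 ≤ l) (hμ : 0 ≤ μ) (hM : 0 ≤ M) (hlμ : |l - μ| ≤ M) :
    shiftedDeriv φ' l M ≤ 2 * D * shiftedDeriv φ' μ M := by
  rcases hM.eq_or_lt with rfl | hM
  · simp [shiftedDeriv_zero_right]
  obtain ⟨hμl, hlμ⟩ := abs_le.1 hlμ
  have hφ : φ' (l + M) ≤ D * φ' (μ + M) :=
    (hmono (mem_Ici.2 (by linarith)) (mem_Ici.2 (by linarith)) (by linarith)).trans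
      (hD (μ + M) (by linarith))
  have hfrac : M / (l + M) ≤ 2 * (M / (μ + M)) := by
    rw [← mul_div_assoc, div_le_div_iff₀ (by linarith) (by linarith)]
    nlinarith
  rw [shiftedDeriv_eq_mul_div, shiftedDeriv_eq_mul_div]
  calc φ' (l + M) * (M / (l + M)) ≤ D * φ' (μ + M) * (2 * (M / (μ + M))) :=
        mul_le_mul hφ hfrac (by positivity) (hφ.trans' (hnn _ (by linarith)))
    _ = 2 * D * (φ' (μ + M) * (M / (μ + M))) := by ring

theorem shiftedDeriv_max_le_add (hmono : MonotoneOn φ' (Ici 0)) (hnn : ∀ t ≥ 0, 0 ≤ φ' t)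
    (hl : 0 ≤ l) {v w : ℝ} (hv : 0 ≤ v) (hw : 0 ≤ w) :
    shiftedDeriv φ' l (max v w) ≤ shiftedDeriv φ' l v + shiftedDeriv φ' l w := by
  rw [(shiftedDeriv_monotoneOn hmono hnn hl).map_max hv hw]
  exact max_le_add_of_nonneg (shiftedDeriv_nonneg hnn hl hv) (shiftedDeriv_nonneg hnn hl hw)

end ShiftedDeriv

theorem shift_change_estimate_general
    (n m : ℕ) (φ' φ'' : ℝ → ℝ) (a₁ a₂ : ℝ) (hN : IsNFunctionDeriv φ')
    (hderiv : ∀ t > (0 : ℝ), HasDerivAt φ' (φ'' t) t)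
    (hassum : ∀ t > (0 : ℝ), a₁ * φ' t ≤ t * φ'' t ∧ t * φ'' t ≤ a₂ * φ' t) :
    ∃ K > (0 : ℝ), ∀ P Q R : EuclideanSpace ℝ (Fin n × Fin m),
      shiftedDeriv φ' (‖P‖) (‖P - Q‖) ≤
        K * (shiftedDeriv φ' (‖R‖) (‖P - R‖) + shiftedDeriv φ' (‖R‖) (‖Q - R‖)) := by
  have hD : ∀ s > 0, φ' (2 * s) ≤ 2 ^ a₂ * φ' s := fun s hs =>
    le_rpow_mul_of_mul_deriv_le hderiv (fun t ht => (hassum t ht).2) hs one_le_two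
  set C : ℝ := 2 * 2 ^ a₂
  refine ⟨C * C, by positivity, fun P Q R => ?_⟩
  set M := max ‖P - R‖ ‖Q - R‖
  have hM : 0 ≤ M := (norm_nonneg _).trans (le_max_left _ _)
  have hPQ : ‖P - Q‖ ≤ 2 * M := by
    have := norm_sub_le_norm_sub_add_norm_sub P R Q
    rw [norm_sub_rev R Q] at this
    linarith [le_max_left ‖P - R‖ ‖Q - R‖, le_max_right ‖P - R‖ ‖Q - R‖]
  have hPR : |‖P‖ - ‖R‖| ≤ M := (abs_norm_sub_norm_le P R).trans (le_max_left _ _)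
  calc shiftedDeriv φ' ‖P‖ ‖P - Q‖ ≤ shiftedDeriv φ' ‖P‖ (2 * M) :=
        shiftedDeriv_monotoneOn hN.mono hN.nonneg_s12 (norm_nonneg _) (norm_nonneg _)
          (mul_nonneg zero_le_two hM) hPQ
    _ ≤ C * shiftedDeriv φ' ‖P‖ M :=
        shiftedDeriv_two_mul_le_s12 hN.mono hN.nonneg_s12 hD (norm_nonneg _) hM
    _ ≤ C * (C * shiftedDeriv φ' ‖R‖ M) := by
        gcongr
        exact shiftedDeriv_le_of_abs_sub_le hN.mono hN.nonneg_s12 hD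
          (norm_nonneg _) (norm_nonneg _) hM hPR
    _ ≤ C * C * (shiftedDeriv φ' ‖R‖ ‖P - R‖ + shiftedDeriv φ' ‖R‖ ‖Q - R‖) := by
        rw [← mul_assoc]
        gcongr
        exact shiftedDeriv_max_le_add hN.mono hN.nonneg_s12
          (norm_nonneg _) (norm_nonneg _) (norm_nonneg _)

/-- Shift-change estimate: `φ'_{|P|}(|P−Q|) ≲ φ'_{|R|}(|P−R|) + φ'_{|R|}(|Q−R|)`. -/
theorem shift_change_estimate
    (n m : ℕ) (φ' φ'' : ℝ → ℝ) (cφ cψ a₁ a₂ : ℝ) (hN : IsNFunctionDeriv φ')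
    (hΔ2 : ∀ t ≥ (0 : ℝ), phiOf φ' (2 * t) ≤ cφ * phiOf φ' t)
    (hΔ2conj : ∀ t ≥ (0 : ℝ), phiConj φ' (2 * t) ≤ cψ * phiConj φ' t)
    (hderiv : ∀ t > (0 : ℝ), HasDerivAt φ' (φ'' t) t)
    (ha₁ : 0 < a₁)
    (hassum : ∀ t > (0 : ℝ), a₁ * φ' t ≤ t * φ'' t ∧ t * φ'' t ≤ a₂ * φ' t) :
    ∃ K > (0 : ℝ), ∀ P Q R : EuclideanSpace ℝ (Fin n × Fin m),
      shiftedDeriv φ' (‖P‖) (‖P - Q‖) ≤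
        K * (shiftedDeriv φ' (‖R‖) (‖P - R‖) + shiftedDeriv φ' (‖R‖) (‖Q - R‖)) :=
  shift_change_estimate_general n m φ' φ'' a₁ a₂ hN hderiv hassum
end

section
/- Let $\phi$ be a $C^2$ N-function satisfying $c\,\phi'(t) \le t\phi''(t) \le C\,\phi'(t)$. Define $A(P) = \frac{\phi'(|P|)}{|P|} P$ for $P \in \mathbb{R}^{n\times m} \setminus \{0\}$. Then for all $P \ne 0$ and all $B \in \mathbb{R}^{n\times m}$, the bilinear form of the derivative satisfies $\sum_{i,j,k,l} B_{ij}\, \partial_{ij} A_{kl}(P)\, B_{kl} \ge \epsilon\, \phi''(|P|)\, |B|^2$ for some $\epsilon > 0$ depending only on $c$. -/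
/-!
Splitting `B` into its components along and orthogonal to `P`, the form is
`φ'(|P|)/|P|` times the orthogonal part plus `φ''(|P|)` times the parallel part, so it
dominates `min (φ'(|P|)/|P|, φ''(|P|)) |B|²`. The upper bound `t φ'' ≤ C φ'` gives
`φ'(|P|)/|P| ≥ φ''(|P|)/C`, and the lower bound `c φ' ≤ t φ''` makes `φ''` positive,
so `ε = 1 / max C 1` works.
-/

open scoped RealInnerProductSpace

section RadialTangentialForm

variable {E : Type*} [NormedAddCommGroup E] [InnerProductSpace ℝ E]

theorem real_inner_sq_div_norm_sq_le (P B : E) : ⟪P, B⟫ ^ 2 / ‖P‖ ^ 2 ≤ ‖B‖ ^ 2 := by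
  refine div_le_of_le_mul₀ (by positivity) (by positivity) ?_
  rw [← mul_pow, mul_comm]
  exact sq_le_sq' (neg_le_of_abs_le (abs_real_inner_le_norm P B)) (real_inner_le_norm P B)

/-- The quadratic form weighting the part of `B` orthogonal to `P` by `a` and the part
along `P` by `b`. -/
noncomputable def radialTangentialForm (a b : ℝ) (P B : E) : ℝ :=
  a * (‖B‖ ^ 2 - ⟪P, B⟫ ^ 2 / ‖P‖ ^ 2) + b * (⟪P, B⟫ ^ 2 / ‖P‖ ^ 2)

theorem mul_norm_sq_le_radialTangentialForm {ε a b : ℝ} (ha : ε ≤ a) (hb : ε ≤ b) (P B : E) :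
    ε * ‖B‖ ^ 2 ≤ radialTangentialForm a b P B := by
  have hpar : 0 ≤ ⟪P, B⟫ ^ 2 / ‖P‖ ^ 2 := by positivity
  have horth : 0 ≤ ‖B‖ ^ 2 - ⟪P, B⟫ ^ 2 / ‖P‖ ^ 2 :=
    sub_nonneg.2 (real_inner_sq_div_norm_sq_le P B)
  calc ε * ‖B‖ ^ 2
      = ε * (‖B‖ ^ 2 - ⟪P, B⟫ ^ 2 / ‖P‖ ^ 2) + ε * (⟪P, B⟫ ^ 2 / ‖P‖ ^ 2) := by ring
    _ ≤ radialTangentialForm a b P B :=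
      add_le_add (mul_le_mul_of_nonneg_right ha horth) (mul_le_mul_of_nonneg_right hb hpar)

end RadialTangentialForm

theorem inv_max_one_mul_le_div {t p q C : ℝ} (ht : 0 < t) (hp : 0 ≤ p) (h : t * q ≤ C * p) :
    (max C 1)⁻¹ * q ≤ p / t := by
  rw [inv_mul_eq_div, div_le_div_iff₀ (by positivity) ht]
  calc q * t = t * q := mul_comm q t
    _ ≤ C * p := h
    _ ≤ p * max C 1 := by rw [mul_comm]; exact mul_le_mul_of_nonneg_left (le_max_left C 1) hp

theorem phi_laplacian_ellipticity_general
    (n m : ℕ) (φ' φ'' : ℝ → ℝ) (c C : ℝ) (hc : 0 < c)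
    (hpos : ∀ t > (0 : ℝ), 0 < φ' t)
    (hassum : ∀ t > (0 : ℝ), c * φ' t ≤ t * φ'' t ∧ t * φ'' t ≤ C * φ' t) :
    ∃ ε > (0 : ℝ), ∀ P : EuclideanSpace ℝ (Fin n × Fin m), P ≠ 0 →
      ∀ B : EuclideanSpace ℝ (Fin n × Fin m),
        ε * φ'' ‖P‖ * ‖B‖ ^ 2 ≤
          φ' ‖P‖ / ‖P‖ * (‖B‖ ^ 2 - ⟪P, B⟫ ^ 2 / ‖P‖ ^ 2) +
            φ'' ‖P‖ * (⟪P, B⟫ ^ 2 / ‖P‖ ^ 2) := by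
  refine ⟨(max C 1)⁻¹, by positivity, fun P hP B => ?_⟩
  have ht : 0 < ‖P‖ := norm_pos_iff.2 hP
  obtain ⟨hlower, hupper⟩ := hassum _ ht
  have hφ'' : 0 < φ'' ‖P‖ :=
    (mul_pos_iff_of_pos_left ht).1 ((mul_pos hc (hpos _ ht)).trans_le hlower)
  refine mul_norm_sq_le_radialTangentialForm ?_ ?_ P B
  · exact inv_max_one_mul_le_div ht (hpos _ ht).le hupper
  · exact mul_le_of_le_one_left hφ''.le (inv_le_one_of_one_le₀ (le_max_right C 1))

/-- Ellipticity of the `φ`-Laplacian: the bilinear form of the derivative of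
`A(P) = φ'(|P|)/|P| · P` is bounded below by `ε φ''(|P|)|B|²`. -/
theorem phi_laplacian_ellipticity
    (n m : ℕ) (φ φ' φ'' : ℝ → ℝ) (c C : ℝ) (hc : 0 < c) (hcC : c ≤ C)
    (hφ' : ∀ t > (0 : ℝ), HasDerivAt φ (φ' t) t)
    (hφ'' : ∀ t > (0 : ℝ), HasDerivAt φ' (φ'' t) t)
    (hpos : ∀ t > (0 : ℝ), 0 < φ' t)
    (hassum : ∀ t > (0 : ℝ), c * φ' t ≤ t * φ'' t ∧ t * φ'' t ≤ C * φ' t) :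
    ∃ ε > (0 : ℝ), ∀ P : EuclideanSpace ℝ (Fin n × Fin m), P ≠ 0 →
      ∀ B : EuclideanSpace ℝ (Fin n × Fin m),
        ε * φ'' ‖P‖ * ‖B‖ ^ 2 ≤
          φ' ‖P‖ / ‖P‖ * (‖B‖ ^ 2 - ⟪P, B⟫ ^ 2 / ‖P‖ ^ 2) +
            φ'' ‖P‖ * (⟪P, B⟫ ^ 2 / ‖P‖ ^ 2) :=
  phi_laplacian_ellipticity_general n m φ' φ'' c C hc hpos hassum
end

section
/- Let $\phi$ be a $C^2$ N-function with $\Delta_2(\{\phi,\phi^*\}) < \infty$ satisfying $\phi'(t) \sim t\phi''(t)$. Define $A(P) = \frac{\phi'(|P|)}{|P|}P$. Then $|A(P) - A(Q)| \lesssim \phi''(|P| + |Q|)\, |P - Q|$ for all $P, Q \in \mathbb{R}^{n\times m}$ not both zero, with a constant depending only on the structural constants of $\phi$. -/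
open MeasureTheory Filter

/-!
Write `ψ(r) = φ'(r)/r`, `t = |P| ≥ s = |Q|`, so that `A(P) - A(Q) = ψ(t)(P - Q) + (ψ(t) - ψ(s))Q`.
Since `rφ''(r) ∼ φ'(r)`, on `[s, t]` we have `|ψ'(r)| ≲ φ'(r)/r² ≤ φ'(t)/r²`, the derivative of
`-φ'(t)/r`; hence `s|ψ(t) - ψ(s)| ≲ ψ(t)(t - s) ≤ ψ(t)|P - Q|`. Finally
`ψ(t) ≤ 2ψ(t + s) ≲ φ''(t + s)`.
-/

open Set

theorem norm_image_sub_le_of_norm_deriv_le_deriv {E : Type*} [NormedAddCommGroup E]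
    [NormedSpace ℝ E] {f f' : ℝ → E} {g g' : ℝ → ℝ} {a b : ℝ} (hab : a ≤ b)
    (hf : ∀ x ∈ Icc a b, HasDerivAt f (f' x) x) (hg : ∀ x ∈ Icc a b, HasDerivAt g (g' x) x)
    (bound : ∀ x ∈ Icc a b, ‖f' x‖ ≤ g' x) :
    ‖f b - f a‖ ≤ g b - g a := by
  refine image_norm_le_of_norm_deriv_right_le_deriv_boundary' (f := fun x => f x - f a)
    (B := fun x => g x - g a) (fun x hx => ((hf x hx).sub_const _).continuousAt.continuousWithinAt)
    (fun x hx => ((hf x (Ico_subset_Icc_self hx)).sub_const _).hasDerivWithinAt) (by simp)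
    (fun x hx => ((hg x hx).sub_const _).continuousAt.continuousWithinAt)
    (fun x hx => ((hg x (Ico_subset_Icc_self hx)).sub_const _).hasDerivWithinAt)
    (fun x hx => bound x (Ico_subset_Icc_self hx)) ⟨hab, le_rfl⟩

section DivSelf

variable {φ' φ'' : ℝ → ℝ} {c : ℝ}

theorem hasDerivAt_div_self (hderiv : ∀ t > (0 : ℝ), HasDerivAt φ' (φ'' t) t) {r : ℝ}
    (hr : 0 < r) : HasDerivAt (fun t => φ' t / t) ((r * φ'' r - φ' r) / r ^ 2) r :=
  ((hderiv r hr).div (hasDerivAt_id' r) hr.ne').congr_deriv (by ring)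

theorem abs_div_self_sub_div_self_le (hderiv : ∀ t > (0 : ℝ), HasDerivAt φ' (φ'' t) t)
    (hmono : MonotoneOn φ' (Ioi 0)) (hc : 0 ≤ c)
    (hbound : ∀ r > (0 : ℝ), |r * φ'' r - φ' r| ≤ c * φ' r) {s t : ℝ} (hs : 0 < s) (hst : s ≤ t) :
    |φ' t / t - φ' s / s| ≤ c * φ' t * (s⁻¹ - t⁻¹) := by
  have hIcc : ∀ r ∈ Icc s t, 0 < r := fun r hr => hs.trans_le hr.1
  have hfence := norm_image_sub_le_of_norm_deriv_le_deriv hst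
    (fun r hr => hasDerivAt_div_self hderiv (hIcc r hr))
    (fun r hr => ((hasDerivAt_inv (hIcc r hr).ne').const_mul (-(c * φ' t))))
    (fun r hr => by
      have hr0 := hIcc r hr
      rw [Real.norm_eq_abs, abs_div, abs_of_pos (pow_pos hr0 2)]
      calc |r * φ'' r - φ' r| / r ^ 2 ≤ c * φ' t / r ^ 2 := by
            gcongr
            exact (hbound r hr0).trans (mul_le_mul_of_nonneg_left
              (hmono hr0 (hs.trans_le hst) hr.2) hc)
        _ = _ := by ring)
  rw [Real.norm_eq_abs] at hfence
  linarith

theorem div_self_nonneg (hnonneg : ∀ r > (0 : ℝ), 0 ≤ φ' r) {t : ℝ} (ht : 0 ≤ t) :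
    0 ≤ φ' t / t := by
  rcases ht.eq_or_lt with rfl | ht
  · simp
  · exact div_nonneg (hnonneg t ht) ht.le

theorem div_self_le_two_mul_div_self (hmono : MonotoneOn φ' (Ioi 0))
    (hnonneg : ∀ r > (0 : ℝ), 0 ≤ φ' r) {t u : ℝ} (ht : 0 < t) (htu : t ≤ u) (hut : u ≤ 2 * t) :
    φ' t / t ≤ 2 * (φ' u / u) := by
  have hu : 0 < u := ht.trans_le htu
  calc φ' t / t ≤ φ' u / t := by gcongr; exact hmono ht hu htu
    _ ≤ φ' u / (u / 2) := by gcongr; exacts [hnonneg u hu, by linarith]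
    _ = 2 * (φ' u / u) := by field_simp

theorem norm_div_norm_smul_sub_le {E : Type*} [NormedAddCommGroup E] [NormedSpace ℝ E]
    (hderiv : ∀ t > (0 : ℝ), HasDerivAt φ' (φ'' t) t) (hmono : MonotoneOn φ' (Ioi 0))
    (hnonneg : ∀ r > (0 : ℝ), 0 ≤ φ' r) (hc : 0 ≤ c)
    (hbound : ∀ r > (0 : ℝ), |r * φ'' r - φ' r| ≤ c * φ' r) {P Q : E} (hQP : ‖Q‖ ≤ ‖P‖) :
    ‖(φ' ‖P‖ / ‖P‖) • P - (φ' ‖Q‖ / ‖Q‖) • Q‖ ≤ (c + 1) * (φ' ‖P‖ / ‖P‖) * ‖P - Q‖ := by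
  have hψ := div_self_nonneg hnonneg (norm_nonneg P)
  rcases (norm_nonneg Q).eq_or_lt with hQ | hQ
  · rw [eq_comm, norm_eq_zero] at hQ
    subst hQ
    rw [smul_zero, sub_zero, sub_zero, norm_smul, Real.norm_of_nonneg hψ]
    nlinarith [mul_nonneg (mul_nonneg hc hψ) (norm_nonneg P)]
  calc ‖(φ' ‖P‖ / ‖P‖) • P - (φ' ‖Q‖ / ‖Q‖) • Q‖
      = ‖(φ' ‖P‖ / ‖P‖) • (P - Q) + (φ' ‖P‖ / ‖P‖ - φ' ‖Q‖ / ‖Q‖) • Q‖ := by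
        congr 1; module
    _ ≤ φ' ‖P‖ / ‖P‖ * ‖P - Q‖ + |φ' ‖P‖ / ‖P‖ - φ' ‖Q‖ / ‖Q‖| * ‖Q‖ := by
        grw [norm_add_le, norm_smul, norm_smul, Real.norm_of_nonneg hψ, Real.norm_eq_abs]
    _ ≤ φ' ‖P‖ / ‖P‖ * ‖P - Q‖ + c * φ' ‖P‖ * (‖Q‖⁻¹ - ‖P‖⁻¹) * ‖Q‖ := by
        grw [abs_div_self_sub_div_self_le hderiv hmono hc hbound hQ hQP]
    _ = φ' ‖P‖ / ‖P‖ * ‖P - Q‖ + c * (φ' ‖P‖ / ‖P‖) * (‖P‖ - ‖Q‖) := by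
        field_simp [(hQ.trans_le hQP).ne']
    _ ≤ φ' ‖P‖ / ‖P‖ * ‖P - Q‖ + c * (φ' ‖P‖ / ‖P‖) * ‖P - Q‖ := by
        grw [norm_sub_norm_le P Q]
    _ = (c + 1) * (φ' ‖P‖ / ‖P‖) * ‖P - Q‖ := by ring

end DivSelf

theorem A_lipschitz_estimate_general
    (n m : ℕ) (φ' φ'' : ℝ → ℝ) (a₁ a₂ : ℝ) (hN : IsNFunctionDeriv φ')
    (hderiv : ∀ t > (0 : ℝ), HasDerivAt φ' (φ'' t) t)
    (ha₁ : 0 < a₁)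
    (hassum : ∀ t > (0 : ℝ), a₁ * φ' t ≤ t * φ'' t ∧ t * φ'' t ≤ a₂ * φ' t) :
    ∃ K > (0 : ℝ), ∀ P Q : EuclideanSpace ℝ (Fin n × Fin m), ¬(P = 0 ∧ Q = 0) →
      ‖(φ' ‖P‖ / ‖P‖) • P - (φ' ‖Q‖ / ‖Q‖) • Q‖ ≤ K * (φ'' (‖P‖ + ‖Q‖) * ‖P - Q‖) := by
  have hmono : MonotoneOn φ' (Ioi 0) := hN.mono.mono Ioi_subset_Ici_self
  have hnonneg : ∀ r > (0 : ℝ), 0 ≤ φ' r := fun r hr => (hN.pos r hr).le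
  have hbound : ∀ r > (0 : ℝ), |r * φ'' r - φ' r| ≤ (|a₂| + 1) * φ' r := fun r hr => by
    obtain ⟨hlow, hup⟩ := hassum r hr
    have := hN.pos r hr
    rw [abs_le]
    constructor <;> nlinarith [le_abs_self a₂, mul_pos ha₁ this]
  refine ⟨2 * (|a₂| + 2) / a₁, by positivity, fun P Q hPQ => ?_⟩
  wlog hQP : ‖Q‖ ≤ ‖P‖ generalizing P Q
  · rw [norm_sub_rev, norm_sub_rev P, add_comm ‖P‖]
    exact this Q P (by tauto) (le_of_not_ge hQP)
  have hP : 0 < ‖P‖ := by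
    by_contra! h
    exact hPQ ⟨norm_le_zero_iff.mp h, norm_le_zero_iff.mp (hQP.trans h)⟩
  have hsum : 0 < ‖P‖ + ‖Q‖ := by positivity
  calc _ ≤ (|a₂| + 1 + 1) * (φ' ‖P‖ / ‖P‖) * ‖P - Q‖ :=
        norm_div_norm_smul_sub_le hderiv hmono hnonneg (by positivity) hbound hQP
    _ ≤ (|a₂| + 2) * (2 * (φ' (‖P‖ + ‖Q‖) / (‖P‖ + ‖Q‖))) * ‖P - Q‖ := by
        rw [show |a₂| + 1 + 1 = |a₂| + 2 by ring]
        gcongr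
        exact div_self_le_two_mul_div_self hmono hnonneg hP (by linarith [norm_nonneg Q])
          (by linarith)
    _ ≤ (|a₂| + 2) * (2 * (φ'' (‖P‖ + ‖Q‖) / a₁)) * ‖P - Q‖ := by
        gcongr _ * (2 * ?_) * _
        rw [div_le_div_iff₀ hsum ha₁]
        linarith [(hassum _ hsum).1]
    _ = _ := by ring

/-- Lipschitz-type estimate for `A(P) = φ'(|P|)/|P| · P`:
`|A(P) − A(Q)| ≲ φ''(|P|+|Q|) |P − Q|`. -/
theorem A_lipschitz_estimate
    (n m : ℕ) (φ' φ'' : ℝ → ℝ) (cφ cψ a₁ a₂ : ℝ) (hN : IsNFunctionDeriv φ')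
    (hΔ2 : ∀ t ≥ (0 : ℝ), phiOf φ' (2 * t) ≤ cφ * phiOf φ' t)
    (hΔ2conj : ∀ t ≥ (0 : ℝ), phiConj φ' (2 * t) ≤ cψ * phiConj φ' t)
    (hderiv : ∀ t > (0 : ℝ), HasDerivAt φ' (φ'' t) t)
    (ha₁ : 0 < a₁)
    (hassum : ∀ t > (0 : ℝ), a₁ * φ' t ≤ t * φ'' t ∧ t * φ'' t ≤ a₂ * φ' t) :
    ∃ K > (0 : ℝ), ∀ P Q : EuclideanSpace ℝ (Fin n × Fin m), ¬(P = 0 ∧ Q = 0) →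
      ‖(φ' ‖P‖ / ‖P‖) • P - (φ' ‖Q‖ / ‖Q‖) • Q‖ ≤ K * (φ'' (‖P‖ + ‖Q‖) * ‖P - Q‖) :=
  A_lipschitz_estimate_general n m φ' φ'' a₁ a₂ hN hderiv ha₁ hassum
end
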